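/- arXiv:2101.02868 — 2 statements merged into one kernel-verified Lean document; each statement's English description precedes it below -/
import Mathlib

section
/- (Theorem 1.) Let L, c, f_co > 0 and θ ∈ (0, π/2), and define F̂(f) = f^{-2}·(L − (L³π²f²/(6c²))·(1 − f_co²/(2f²) − cos θ)²) for f > 0. Then f₁⁽¹⁾ = f_co² / √(12c²/(L²π²) + 2(1 − cos θ)·f_co²) is the unique global maximizer of F̂ on (0, ∞); that is, F̂(f) < F̂(f₁⁽¹⁾) for every f > 0 with f ≠ f₁⁽¹⁾. -/
open Real

/-- The normalized signal-strength function
`F̂(f) = f⁻²·(L − (L³π²f²/(6c²))·(1 − f_co²/(2f²) − cos θ)²)`. -/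
noncomputable def Fhat (L c f_co θ : ℝ) (f : ℝ) : ℝ :=
  (L - (L ^ 3 * π ^ 2 * f ^ 2 / (6 * c ^ 2)) *
      (1 - f_co ^ 2 / (2 * f ^ 2) - Real.cos θ) ^ 2) / f ^ 2

/-- The critical point `f₁⁽¹⁾ = f_co² / √(12c²/(L²π²) + 2(1 − cos θ)·f_co²)`. -/
noncomputable def fOne (L c f_co θ : ℝ) : ℝ :=
  f_co ^ 2 / Real.sqrt (12 * c ^ 2 / (L ^ 2 * π ^ 2) + 2 * (1 - Real.cos θ) * f_co ^ 2)

/-!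
In the variable `x = f⁻²` the function `F̂` becomes the concave quadratic
`L x − K ((1 − cos θ) − (f_co²/2) x)²` with `K = L³π²/(6c²) > 0`, whose unique critical point
is `x = f₁⁽¹⁾⁻²`. Since `f ↦ f⁻²` is injective on `(0, ∞)`, uniqueness carries over to `f`.
-/

lemma quadratic_sub_eq_of_critical {K p a b x₀ : ℝ} (hx₀ : 2 * K * b ^ 2 * x₀ = p + 2 * K * a * b)
    (x : ℝ) :
    (p * x₀ - K * (a - b * x₀) ^ 2) - (p * x - K * (a - b * x) ^ 2) = K * b ^ 2 * (x - x₀) ^ 2 := by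
  linear_combination (x - x₀) * hx₀

lemma quadratic_lt_of_critical {K p a b x₀ x : ℝ} (hK : 0 < K) (hb : b ≠ 0)
    (hx₀ : 2 * K * b ^ 2 * x₀ = p + 2 * K * a * b) (hx : x ≠ x₀) :
    p * x - K * (a - b * x) ^ 2 < p * x₀ - K * (a - b * x₀) ^ 2 := by
  have hgap : 0 < K * b ^ 2 * (x - x₀) ^ 2 := by
    have := sub_ne_zero.mpr hx
    positivity
  linarith [quadratic_sub_eq_of_critical hx₀ x]

section Fhat

variable (L c f_co θ : ℝ)

lemma Fhat_eq_of_ne_zero {f : ℝ} (hf : f ≠ 0) :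
    Fhat L c f_co θ f = L * (f ^ 2)⁻¹ -
      L ^ 3 * π ^ 2 / (6 * c ^ 2) * ((1 - cos θ) - f_co ^ 2 / 2 * (f ^ 2)⁻¹) ^ 2 := by
  unfold Fhat
  field_simp
  ring

variable {L c f_co}

lemma fOne_radicand_pos (hc : c ≠ 0) (hL : L ≠ 0) :
    0 < 12 * c ^ 2 / (L ^ 2 * π ^ 2) + 2 * (1 - cos θ) * f_co ^ 2 := by
  have := cos_le_one θ
  have : 0 < 12 * c ^ 2 / (L ^ 2 * π ^ 2) := by positivity
  nlinarith [sq_nonneg f_co]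

lemma fOne_pos (hc : c ≠ 0) (hL : L ≠ 0) (hf_co : f_co ≠ 0) : 0 < fOne L c f_co θ :=
  div_pos (by positivity) (sqrt_pos.mpr (fOne_radicand_pos θ hc hL))

/-- `x = f₁⁽¹⁾⁻²` is the critical point of the quadratic of `Fhat_eq_of_ne_zero`. -/
lemma inv_fOne_sq_isCritical (hc : c ≠ 0) (hL : L ≠ 0) (hf_co : f_co ≠ 0) :
    2 * (L ^ 3 * π ^ 2 / (6 * c ^ 2)) * (f_co ^ 2 / 2) ^ 2 * (fOne L c f_co θ ^ 2)⁻¹ =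
      L + 2 * (L ^ 3 * π ^ 2 / (6 * c ^ 2)) * (1 - cos θ) * (f_co ^ 2 / 2) := by
  rw [fOne, div_pow _ (sqrt _), sq_sqrt (fOne_radicand_pos θ hc hL).le, inv_div]
  field_simp
  ring

end Fhat

theorem fOne_unique_global_maximizer_general (L c f_co θ : ℝ) (hL : 0 < L) (hc : 0 < c)
    (hfco : 0 < f_co) :
    0 < fOne L c f_co θ ∧
      ∀ f : ℝ, 0 < f → f ≠ fOne L c f_co θ →
        Fhat L c f_co θ f < Fhat L c f_co θ (fOne L c f_co θ) := by
  have hf₁ := fOne_pos θ hc.ne' hL.ne' hfco.ne'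
  refine ⟨hf₁, fun f hf hne => ?_⟩
  have hx : (f ^ 2)⁻¹ ≠ (fOne L c f_co θ ^ 2)⁻¹ := fun h =>
    hne ((pow_left_inj₀ hf.le hf₁.le two_ne_zero).mp (inv_injective h))
  rw [Fhat_eq_of_ne_zero _ _ _ _ hf.ne', Fhat_eq_of_ne_zero _ _ _ _ hf₁.ne']
  exact quadratic_lt_of_critical (by positivity) (by positivity)
    (inv_fOne_sq_isCritical θ hc.ne' hL.ne' hfco.ne') hx

/-- Theorem 1: `f₁⁽¹⁾` is the unique global maximizer of `F̂` on `(0, ∞)`: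
`F̂(f) < F̂(f₁⁽¹⁾)` for every `f > 0` with `f ≠ f₁⁽¹⁾`. -/
theorem fOne_unique_global_maximizer (L c f_co θ : ℝ) (hL : 0 < L) (hc : 0 < c)
    (hfco : 0 < f_co) (hθ : θ ∈ Set.Ioo 0 (π / 2)) :
    0 < fOne L c f_co θ ∧
      ∀ f : ℝ, 0 < f → f ≠ fOne L c f_co θ →
        Fhat L c f_co θ f < Fhat L c f_co θ (fOne L c f_co θ) :=
  fOne_unique_global_maximizer_general L c f_co θ hL hc hfco
end

section
/- Let Ξ > 0, q_c > 0 and q_max > 0, and define F̂_EE(q) = ((q + q_c)/(1 + qΞ))·Ξ − ln(1 + qΞ) for q ≥ 0. If F̂_EE(q_max) < 0, then there exists a unique q_o ∈ (0, q_max) such that F̂_EE(q_o) = 0. -/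
/-! `F̂_EE` starts at `F̂_EE(0) = q_c Ξ > 0` and is strictly decreasing on `[0, ∞)`, its derivative
being `-Ξ²(q + q_c)/(1 + qΞ)²`; so once it is negative at `q_max`, the intermediate value theorem
gives a zero in `(0, q_max)` and strict monotonicity makes it unique. -/

open Real

/-- Auxiliary function `F̂_EE(q) = ((q + q_c)/(1 + qΞ))·Ξ − ln(1 + qΞ)`. -/
noncomputable def FhatEE (Ξ q_c q : ℝ) : ℝ :=
  (q + q_c) / (1 + q * Ξ) * Ξ - Real.log (1 + q * Ξ)

theorem StrictAntiOn.existsUnique_zero_Ioo {f : ℝ → ℝ} {a b : ℝ} (hab : a ≤ b)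
    (hf : StrictAntiOn f (Set.Icc a b)) (hcont : ContinuousOn f (Set.Icc a b))
    (ha : 0 < f a) (hb : f b < 0) :
    ∃! x, x ∈ Set.Ioo a b ∧ f x = 0 := by
  obtain ⟨x, hx, hfx⟩ := intermediate_value_Icc' hab hcont ⟨hb.le, ha.le⟩
  have hxa : x ≠ a := by rintro rfl; exact ha.ne' hfx
  have hxb : x ≠ b := by rintro rfl; exact hb.ne hfx
  refine ⟨x, ⟨⟨lt_of_le_of_ne hx.1 hxa.symm, lt_of_le_of_ne hx.2 hxb⟩, hfx⟩, ?_⟩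
  rintro y ⟨hy, hfy⟩
  exact hf.injOn (Set.Ioo_subset_Icc_self hy) hx (hfy.trans hfx.symm)

theorem FhatEE_zero (Ξ q_c : ℝ) : FhatEE Ξ q_c 0 = q_c * Ξ := by
  simp [FhatEE]

theorem hasDerivAt_FhatEE {Ξ q : ℝ} (q_c : ℝ) (hq : 1 + q * Ξ ≠ 0) :
    HasDerivAt (FhatEE Ξ q_c) (-(Ξ ^ 2 * (q + q_c)) / (1 + q * Ξ) ^ 2) q := by
  have hden : HasDerivAt (fun q : ℝ => 1 + q * Ξ) Ξ q := by
    simpa using ((hasDerivAt_id q).mul_const Ξ).const_add 1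
  have hnum : HasDerivAt (fun q : ℝ => q + q_c) 1 q := (hasDerivAt_id q).add_const q_c
  refine (((hnum.div hden hq).mul_const Ξ).sub (hden.log hq)).congr_deriv ?_
  field_simp
  ring

theorem continuousOn_FhatEE {Ξ : ℝ} (q_c : ℝ) (hΞ : 0 ≤ Ξ) :
    ContinuousOn (FhatEE Ξ q_c) (Set.Ici 0) := fun q hq =>
  (hasDerivAt_FhatEE q_c (by have : (0 : ℝ) ≤ q := hq; positivity)).continuousAt.continuousWithinAt

theorem strictAntiOn_FhatEE {Ξ q_c : ℝ} (hΞ : 0 < Ξ) (hqc : 0 ≤ q_c) :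
    StrictAntiOn (FhatEE Ξ q_c) (Set.Ici 0) := by
  refine strictAntiOn_of_deriv_neg (convex_Ici 0) (continuousOn_FhatEE q_c hΞ.le) fun q hq => ?_
  rw [interior_Ici] at hq
  have hq : (0 : ℝ) < q := hq
  rw [(hasDerivAt_FhatEE q_c (by positivity)).deriv]
  have : 0 < Ξ ^ 2 * (q + q_c) := by positivity
  exact div_neg_of_neg_of_pos (neg_neg_of_pos this) (by positivity)

/-- if `F̂_EE(q_max) < 0`, then there exists a unique `q_o ∈ (0, q_max)`
with `F̂_EE(q_o) = 0`. -/
theorem exists_unique_zero_FhatEE (Ξ q_c q_max : ℝ) (hΞ : 0 < Ξ) (hqc : 0 < q_c)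
    (hqm : 0 < q_max) (h : FhatEE Ξ q_c q_max < 0) :
    ∃! q_o : ℝ, q_o ∈ Set.Ioo 0 q_max ∧ FhatEE Ξ q_c q_o = 0 := by
  have hsub : Set.Icc 0 q_max ⊆ Set.Ici 0 := Set.Icc_subset_Ici_self
  refine StrictAntiOn.existsUnique_zero_Ioo hqm.le ((strictAntiOn_FhatEE hΞ hqc.le).mono hsub)
    ((continuousOn_FhatEE q_c hΞ.le).mono hsub) ?_ h
  rw [FhatEE_zero]
  positivity
end
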